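/- Let H be a Hopf quasigroup and M, N Long H-dimodules. Then M⊗N is a Long H-dimodule with diagonal action h·(m⊗n) = h₍₁₎·m ⊗ h₍₂₎·n and codiagonal coaction (m⊗n) ↦ m⁽⁰⁾⊗n⁽⁰⁾⊗m⁽¹⁾n⁽¹⁾. -/

import Mathlib

open TensorProduct

/-- A Hopf quasigroup over a field `k`: a unital (not necessarily associative) algebra
and coassociative counital coalgebra, with `comul` and `counit` algebra maps, together
with an antipode `antipode` satisfying
`S(h₁)(h₂g) = h₁(S(h₂)g) = (gh₁)S(h₂) = (gS(h₁))h₂ = ε(h)g`. -/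
structure HopfQuasigroup (k : Type*) [Field k] (H : Type*) [AddCommMonoid H] [Module k H] where
  mul : H →ₗ[k] H →ₗ[k] H
  one : H
  comul : H →ₗ[k] H ⊗[k] H
  counit : H →ₗ[k] k
  antipode : H →ₗ[k] H
  one_mul : ∀ h, mul one h = h
  mul_one : ∀ h, mul h one = h
  coassoc : ∀ h, (TensorProduct.assoc k H H H) ((comul.rTensor H) (comul h))
      = (LinearMap.lTensor H comul) (comul h)
  counit_comul : ∀ h, (TensorProduct.lid k H) ((counit.rTensor H) (comul h)) = h
  comul_counit : ∀ h, (TensorProduct.rid k H) ((LinearMap.lTensor H counit) (comul h)) = h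
  counit_one : counit one = 1
  counit_mul : ∀ a b, counit (mul a b) = counit a * counit b
  comul_one : comul one = one ⊗ₜ[k] one
  comul_mul : ∀ a b, comul (mul a b)
      = (TensorProduct.map (TensorProduct.lift mul) (TensorProduct.lift mul))
          ((TensorProduct.tensorTensorTensorComm k H H H H) ((comul a) ⊗ₜ[k] (comul b)))
  -- `S(h₁)(h₂ g) = ε(h) g`
  antipode_mul_left : ∀ g h,
      TensorProduct.lift ((mul.comp antipode).compl₂ (mul.flip g)) (comul h) = counit h • g
  -- `h₁(S(h₂) g) = ε(h) g`
  mul_antipode_left : ∀ g h,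
      TensorProduct.lift (mul.compl₂ ((mul.comp antipode).flip g)) (comul h) = counit h • g
  -- `(g h₁)S(h₂) = ε(h) g`
  antipode_mul_right : ∀ g h,
      TensorProduct.lift ((mul.comp (mul g)).compl₂ antipode) (comul h) = counit h • g
  -- `(g S(h₁))h₂ = ε(h) g`
  mul_antipode_right : ∀ g h,
      TensorProduct.lift (mul.comp ((mul g).comp antipode)) (comul h) = counit h • g

variable {k H : Type*} [Field k] [AddCommMonoid H] [Module k H]

/-- A left quasimodule over a Hopf quasigroup: `1·m = m` and
`h₁·(S(h₂)·m) = ε(h)m = S(h₁)·(h₂·m)`. -/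
structure LeftQuasimodule (hq : HopfQuasigroup k H) (M : Type*)
    [AddCommMonoid M] [Module k M] where
  act : H →ₗ[k] M →ₗ[k] M
  act_one : ∀ m, act hq.one m = m
  -- `h₁·(S(h₂)·m) = ε(h) m`
  act_antipode : ∀ h m,
      TensorProduct.lift (act.compl₂ ((act.comp hq.antipode).flip m)) (hq.comul h)
        = hq.counit h • m
  -- `S(h₁)·(h₂·m) = ε(h) m`
  antipode_act : ∀ h m,
      TensorProduct.lift ((act.comp hq.antipode).compl₂ (act.flip m)) (hq.comul h)
        = hq.counit h • m

/-- A counital coassociative right comodule over a Hopf quasigroup. -/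
structure RightComodule (hq : HopfQuasigroup k H) (M : Type*)
    [AddCommMonoid M] [Module k M] where
  coact : M →ₗ[k] M ⊗[k] H
  coassoc : ∀ m, (TensorProduct.assoc k M H H) ((coact.rTensor H) (coact m))
      = (LinearMap.lTensor M hq.comul) (coact m)
  coact_counit : ∀ m, (TensorProduct.rid k M) ((LinearMap.lTensor M hq.counit) (coact m)) = m

/-- A Long dimodule over a Hopf quasigroup: a left quasimodule and a counital
coassociative right comodule such that `(h·m)⁽⁰⁾⊗(h·m)⁽¹⁾ = h·m⁽⁰⁾⊗m⁽¹⁾`. -/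
structure LongDimodule (hq : HopfQuasigroup k H) (M : Type*)
    [AddCommMonoid M] [Module k M] extends LeftQuasimodule hq M, RightComodule hq M where
  compat : ∀ h m, coact (act h m) = ((act h).rTensor H) (coact m)


/-- The diagonal action `h·(m⊗n) = h₁·m ⊗ h₂·n` of `H` on `M ⊗ N`. -/
noncomputable def diagAct {hq : HopfQuasigroup k H} {M N : Type*}
    [AddCommMonoid M] [Module k M] [AddCommMonoid N] [Module k N]
    (qm : LeftQuasimodule hq M) (qn : LeftQuasimodule hq N) :
    H →ₗ[k] (M ⊗[k] N) →ₗ[k] (M ⊗[k] N) :=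
  (TensorProduct.homTensorHomMap (RingHom.id k) M N M N).comp
    ((TensorProduct.map qm.act qn.act).comp hq.comul)

/-- The codiagonal coaction `m⊗n ↦ m⁽⁰⁾ ⊗ n⁽⁰⁾ ⊗ m⁽¹⁾n⁽¹⁾` of `H` on `M ⊗ N`. -/
noncomputable def codiagCoact {hq : HopfQuasigroup k H} {M N : Type*}
    [AddCommMonoid M] [Module k M] [AddCommMonoid N] [Module k N]
    (lm : LongDimodule hq M) (ln : LongDimodule hq N) :
    (M ⊗[k] N) →ₗ[k] (M ⊗[k] N) ⊗[k] H :=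
  (LinearMap.lTensor (M ⊗[k] N) (TensorProduct.lift hq.mul)).comp
    (((TensorProduct.tensorTensorTensorComm k M H N H).toLinearMap).comp
      (TensorProduct.map lm.coact ln.coact))


namespace TLaux
open LinearMap

variable {k H : Type*} [Field k] [AddCommMonoid H] [Module k H]

section
variable (hq : HopfQuasigroup k H)

noncomputable def muH : H ⊗[k] H →ₗ[k] H := TensorProduct.lift hq.mul

noncomputable def M2 : (H ⊗[k] H) ⊗[k] (H ⊗[k] H) →ₗ[k] H ⊗[k] H :=
  (TensorProduct.map (muH hq) (muH hq)) ∘ₗ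
    (TensorProduct.tensorTensorTensorComm k H H H H).toLinearMap

variable {hq}

lemma muH_tmul (a b : H) : muH hq (a ⊗ₜ[k] b) = hq.mul a b := by
  simp [muH]

lemma M2_tmul (a b c d : H) :
    M2 hq ((a ⊗ₜ[k] b) ⊗ₜ[k] (c ⊗ₜ[k] d)) = hq.mul a c ⊗ₜ[k] hq.mul b d := by
  simp [M2, muH]

lemma comul_mul_map :
    hq.comul ∘ₗ muH hq = (M2 hq) ∘ₗ (TensorProduct.map hq.comul hq.comul) := by
  apply TensorProduct.ext'
  intro a b
  simp only [comp_apply, TensorProduct.map_tmul, muH_tmul]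
  rw [hq.comul_mul a b]
  rfl

lemma M2_one (u : H ⊗[k] H) : M2 hq (u ⊗ₜ[k] (hq.one ⊗ₜ[k] hq.one)) = u := by
  induction u using TensorProduct.induction_on with
  | zero => simp
  | tmul a b => rw [M2_tmul, hq.mul_one, hq.mul_one]
  | add x y hx hy => rw [TensorProduct.add_tmul, map_add, hx, hy]

/-- `b₁ S(b₂) = ε(b) 1` -/
lemma mul_antipode_one (b : H) :
    muH hq ((hq.antipode.lTensor H) (hq.comul b)) = hq.counit b • hq.one := by
  have e : muH hq ∘ₗ (hq.antipode.lTensor H)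
      = TensorProduct.lift ((hq.mul.comp (hq.mul hq.one)).compl₂ hq.antipode) := by
    apply TensorProduct.ext'
    intro x y
    simp [muH, hq.one_mul]
  have := congrArg (fun f => f (hq.comul b)) e
  simp only [comp_apply] at this
  rw [this, hq.antipode_mul_right hq.one b]

/-- `S(b₁) b₂ = ε(b) 1` -/
lemma antipode_mul_one (b : H) :
    muH hq ((hq.antipode.rTensor H) (hq.comul b)) = hq.counit b • hq.one := by
  have e : muH hq ∘ₗ (hq.antipode.rTensor H)
      = TensorProduct.lift ((hq.mul.comp hq.antipode).compl₂ (hq.mul.flip hq.one)) := by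
    apply TensorProduct.ext'
    intro x y
    simp [muH, hq.mul_one]
  have := congrArg (fun f => f (hq.comul b)) e
  simp only [comp_apply] at this
  rw [this, hq.antipode_mul_left hq.one b]

end
section
variable (hq : HopfQuasigroup k H)

/-- swap quad legs `((x₁⊗x₂)⊗(y₁⊗y₂)) ↦ ((x₁⊗y₂)⊗(x₂⊗y₁))` -/
noncomputable def sigma0 : (H ⊗[k] H) ⊗[k] (H ⊗[k] H) →ₗ[k] (H ⊗[k] H) ⊗[k] (H ⊗[k] H) :=
  (TensorProduct.tensorTensorTensorComm k H H H H).toLinearMap ∘ₗ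
    ((TensorProduct.comm k H H).toLinearMap.lTensor (H ⊗[k] H))

noncomputable def gchain : H →ₗ[k] H ⊗[k] (H ⊗[k] H) := (hq.comul.lTensor H) ∘ₗ hq.comul

noncomputable def A2 : (H ⊗[k] (H ⊗[k] H)) ⊗[k] H →ₗ[k] (H ⊗[k] H) ⊗[k] (H ⊗[k] H) :=
  (TensorProduct.assoc k (H ⊗[k] H) H H).toLinearMap ∘ₗ
    ((TensorProduct.assoc k H H H).symm.toLinearMap.rTensor H)

variable {hq}

lemma sigma0_tmul (x₁ x₂ y₁ y₂ : H) :
    sigma0 (k := k) (H := H) ((x₁ ⊗ₜ[k] x₂) ⊗ₜ[k] (y₁ ⊗ₜ[k] y₂))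
      = (x₁ ⊗ₜ[k] y₂) ⊗ₜ[k] (x₂ ⊗ₜ[k] y₁) := by
  simp [sigma0]

lemma A2_tmul (x c d z : H) :
    A2 (k := k) (H := H) ((x ⊗ₜ[k] (c ⊗ₜ[k] d)) ⊗ₜ[k] z)
      = (x ⊗ₜ[k] c) ⊗ₜ[k] (d ⊗ₜ[k] z) := by
  simp [A2]

lemma STEP1 :
    (TensorProduct.map hq.comul hq.comul) ∘ₗ hq.comul
      = A2 (k := k) (H := H) ∘ₗ ((gchain hq).rTensor H) ∘ₗ hq.comul := by
  apply LinearMap.ext; intro h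
  have e1 : (TensorProduct.map hq.comul hq.comul) (hq.comul h)
      = (hq.comul.rTensor (H ⊗[k] H)) ((hq.comul.lTensor H) (hq.comul h)) := by
    rw [← LinearMap.rTensor_comp_lTensor (f := hq.comul) (g := hq.comul), LinearMap.comp_apply]
  have nat1 : (hq.comul.rTensor (H ⊗[k] H)) ∘ₗ (TensorProduct.assoc k H H H).toLinearMap
      = (TensorProduct.assoc k (H ⊗[k] H) H H).toLinearMap ∘ₗ
          ((hq.comul.rTensor H).rTensor H) := by
    apply TensorProduct.ext_threefold; intro x y z
    simp
  have c2 : (hq.comul.rTensor H) ∘ₗ hq.comul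
      = (TensorProduct.assoc k H H H).symm.toLinearMap ∘ₗ gchain hq := by
    apply LinearMap.ext; intro x
    simp only [LinearMap.comp_apply, gchain, LinearEquiv.coe_coe]
    rw [← hq.coassoc x, LinearEquiv.symm_apply_apply]
  calc (TensorProduct.map hq.comul hq.comul ∘ₗ hq.comul) h
      = (hq.comul.rTensor (H ⊗[k] H)) ((hq.comul.lTensor H) (hq.comul h)) := e1
    _ = (hq.comul.rTensor (H ⊗[k] H))
          ((TensorProduct.assoc k H H H) ((hq.comul.rTensor H) (hq.comul h))) := by
        rw [hq.coassoc h]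
    _ = (TensorProduct.assoc k (H ⊗[k] H) H H)
          (((hq.comul.rTensor H).rTensor H) ((hq.comul.rTensor H) (hq.comul h))) := by
        have := congrArg (fun f => f ((hq.comul.rTensor H) (hq.comul h))) nat1
        simpa using this
    _ = (TensorProduct.assoc k (H ⊗[k] H) H H)
          ((((hq.comul.rTensor H) ∘ₗ hq.comul).rTensor H) (hq.comul h)) := by
        rw [LinearMap.rTensor_comp, LinearMap.comp_apply]
    _ = (A2 ∘ₗ ((gchain hq).rTensor H) ∘ₗ hq.comul) h := by
        rw [c2, LinearMap.rTensor_comp]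
        simp [A2, LinearMap.comp_apply]

variable {X Y U V : Type*} [AddCommMonoid X] [Module k X] [AddCommMonoid Y] [Module k Y]
  [AddCommMonoid U] [Module k U] [AddCommMonoid V] [Module k V]

/-- pull a counit leg out through `comul` -/
lemma counit_pull (fF : H →ₗ[k] X) (y' : Y) (x : H) :
    (TensorProduct.map fF (hq.counit.smulRight y')) (hq.comul x) = fF x ⊗ₜ[k] y' := by
  have e : TensorProduct.map fF (hq.counit.smulRight y')
      = ((TensorProduct.mk k X Y).flip y') ∘ₗ fF ∘ₗ (TensorProduct.rid k H).toLinearMap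
          ∘ₗ (hq.counit.lTensor H) := by
    apply TensorProduct.ext'; intro a b
    simp [TensorProduct.tmul_smul, TensorProduct.smul_tmul']
  rw [e]
  simp only [LinearMap.comp_apply, LinearEquiv.coe_coe]
  rw [hq.comul_counit x]
  simp

/-- rotate the third argument of a trilinear map to the front -/
noncomputable def Fat (F : H →ₗ[k] H →ₗ[k] U →ₗ[k] X) : U →ₗ[k] H →ₗ[k] H →ₗ[k] X :=
  ((LinearMap.lflip (R₀ := k)).toLinearMap ∘ₗ F).flip

@[simp] lemma Fat_apply (F : H →ₗ[k] H →ₗ[k] U →ₗ[k] X) (u : U) (x z : H) :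
    Fat F u x z = F x z u := rfl

lemma lift_lift_tmul (F : H →ₗ[k] H →ₗ[k] U →ₗ[k] X) (t : H ⊗[k] H) (u : U) :
    TensorProduct.lift (TensorProduct.lift F) (t ⊗ₜ[k] u)
      = TensorProduct.lift (Fat F u) t := by
  induction t using TensorProduct.induction_on with
  | zero => simp
  | tmul a b => simp
  | add s t hs ht => rw [TensorProduct.add_tmul, map_add, map_add, hs, ht]

end

section
variable {hq : HopfQuasigroup k H}
variable {X Y U V : Type*} [AddCommMonoid X] [Module k X] [AddCommMonoid Y] [Module k Y]
  [AddCommMonoid U] [Module k U] [AddCommMonoid V] [Module k V]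

/-- Generic interleaved double-collapse lemma, no residual legs:
`Σ F(h₁,h₄) ⊗ G(h₂,h₃) = ε(h) • (x₀ ⊗ y₀)`. -/
theorem GIL0 (F : H →ₗ[k] H →ₗ[k] X) (G : H →ₗ[k] H →ₗ[k] Y) (x₀ : X) (y₀ : Y)
    (hF : ∀ w, TensorProduct.lift F (hq.comul w) = hq.counit w • x₀)
    (hG : ∀ w, TensorProduct.lift G (hq.comul w) = hq.counit w • y₀) (h : H) :
    (TensorProduct.map (TensorProduct.lift F) (TensorProduct.lift G))
      (sigma0 (k := k) (H := H) ((TensorProduct.map hq.comul hq.comul) (hq.comul h)))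
      = hq.counit h • (x₀ ⊗ₜ[k] y₀) := by
  have hstep := congrArg (fun f => f h) (STEP1 (hq := hq))
  simp only [LinearMap.comp_apply] at hstep
  rw [hstep]
  have MAPEQ : ∀ t : H ⊗[k] H,
      (TensorProduct.map (TensorProduct.lift F) (TensorProduct.lift G))
        (sigma0 (k := k) (H := H) (A2 (k := k) (H := H) (((gchain hq).rTensor H) t)))
      = (TensorProduct.lift F t) ⊗ₜ[k] y₀ := by
    intro t
    induction t using TensorProduct.induction_on with
    | zero => simp
    | add s t hs ht => simp only [map_add, TensorProduct.add_tmul, hs, ht]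
    | tmul x z =>
      rw [LinearMap.rTensor_tmul]
      have subC : ∀ q : H ⊗[k] (H ⊗[k] H),
          (TensorProduct.map (TensorProduct.lift F) (TensorProduct.lift G))
            (sigma0 (k := k) (H := H) (A2 (k := k) (H := H) (q ⊗ₜ[k] z)))
          = (TensorProduct.map (F.flip z) (TensorProduct.lift G)) q := by
        intro q
        induction q using TensorProduct.induction_on with
        | zero => simp
        | add q₁ q₂ h₁ h₂ => simp only [map_add, TensorProduct.add_tmul, h₁, h₂]
        | tmul x' w =>
          induction w using TensorProduct.induction_on with
          | zero => simp
          | add w₁ w₂ hw₁ hw₂ =>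
            simp only [map_add, TensorProduct.add_tmul, TensorProduct.tmul_add, hw₁, hw₂]
          | tmul c d =>
            rw [A2_tmul, sigma0_tmul]
            simp
      rw [subC (gchain hq x)]
      have e2 : (TensorProduct.map (F.flip z) (TensorProduct.lift G)) (gchain hq x)
          = (TensorProduct.map (F.flip z) ((TensorProduct.lift G) ∘ₗ hq.comul))
              (hq.comul x) := by
        simp only [gchain, LinearMap.comp_apply]
        rw [← LinearMap.comp_apply (TensorProduct.map _ _), LinearMap.map_comp_lTensor]
      have e3 : (TensorProduct.lift G) ∘ₗ hq.comul = hq.counit.smulRight y₀ :=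
        LinearMap.ext fun w => by simp [hG w]
      rw [e2, e3, counit_pull]
      simp
  rw [MAPEQ (hq.comul h), hF h, TensorProduct.smul_tmul']

variable (F : H →ₗ[k] H →ₗ[k] U →ₗ[k] X) (G : H →ₗ[k] H →ₗ[k] V →ₗ[k] Y)

/-- evaluation of the interleaved expression with residual legs -/
noncomputable def EVr :
    ((H ⊗[k] H) ⊗[k] (H ⊗[k] H)) ⊗[k] (U ⊗[k] V) →ₗ[k] X ⊗[k] Y :=
  (TensorProduct.map (TensorProduct.lift (TensorProduct.lift F))
      (TensorProduct.lift (TensorProduct.lift G))) ∘ₗ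
    (TensorProduct.tensorTensorTensorComm k (H ⊗[k] H) (H ⊗[k] H) U V).toLinearMap ∘ₗ
      ((sigma0 (k := k) (H := H)).rTensor (U ⊗[k] V))

lemma EVr_tmul (x₁ x₂ y₁ y₂ : H) (u : U) (v : V) :
    EVr F G (((x₁ ⊗ₜ[k] x₂) ⊗ₜ[k] (y₁ ⊗ₜ[k] y₂)) ⊗ₜ[k] (u ⊗ₜ[k] v))
      = F x₁ y₂ u ⊗ₜ[k] G x₂ y₁ v := by
  simp only [EVr, LinearMap.comp_apply, LinearMap.rTensor_tmul, sigma0_tmul,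
    LinearEquiv.coe_coe, TensorProduct.tensorTensorTensorComm_tmul, TensorProduct.map_tmul]
  simp

/-- Generic interleaved double-collapse lemma with residual legs:
`Σ F(h₁,h₄,u) ⊗ G(h₂,h₃,v) = (F0 ⊗ G0) (D h)` where `u ⊗ v = D (h₅)`. -/
theorem GILr (F0 : U →ₗ[k] X) (G0 : V →ₗ[k] Y) (D : H →ₗ[k] U ⊗[k] V)
    (hF : ∀ u w, TensorProduct.lift (Fat F u) (hq.comul w) = hq.counit w • F0 u)
    (hG : ∀ v w, TensorProduct.lift (Fat G v) (hq.comul w) = hq.counit w • G0 v) (h : H) :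
    EVr F G ((TensorProduct.map ((TensorProduct.map hq.comul hq.comul) ∘ₗ hq.comul) D)
        (hq.comul h))
      = (TensorProduct.map F0 G0) (D h) := by
  set K0' : (H ⊗[k] H) ⊗[k] (U ⊗[k] V) →ₗ[k] X ⊗[k] Y :=
    (TensorProduct.map (TensorProduct.lift (TensorProduct.lift F)) G0) ∘ₗ
      (TensorProduct.assoc k (H ⊗[k] H) U V).symm.toLinearMap with hK0'
  have subD : ∀ (t : H ⊗[k] H) (u : U) (v : V),
      K0' (t ⊗ₜ[k] (u ⊗ₜ[k] v)) = (TensorProduct.lift (Fat F u) t) ⊗ₜ[k] G0 v := by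
    intro t u v
    rw [hK0']
    simp only [LinearMap.comp_apply, LinearEquiv.coe_coe, TensorProduct.assoc_symm_tmul,
      TensorProduct.map_tmul]
    rw [lift_lift_tmul]
  -- rewrite the input using STEP1
  have hinput : (TensorProduct.map ((TensorProduct.map hq.comul hq.comul) ∘ₗ hq.comul) D)
        (hq.comul h)
      = ((A2 (k := k) (H := H)).rTensor (U ⊗[k] V))
          ((TensorProduct.map ((gchain hq).rTensor H) D)
            ((hq.comul.rTensor H) (hq.comul h))) := by
    rw [STEP1 (hq := hq)]
    have key : ∀ t : H ⊗[k] H,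
        (TensorProduct.map ((A2 (k := k) (H := H) ∘ₗ ((gchain hq).rTensor H)) ∘ₗ hq.comul) D) t
          = ((A2 (k := k) (H := H)).rTensor (U ⊗[k] V))
              ((TensorProduct.map ((gchain hq).rTensor H) D) ((hq.comul.rTensor H) t)) := by
      intro t
      induction t using TensorProduct.induction_on with
      | zero => simp
      | add t₁ t₂ h₁ h₂ => simp only [map_add, h₁, h₂]
      | tmul a b =>
        simp only [TensorProduct.map_tmul, LinearMap.rTensor_tmul, LinearMap.comp_apply]
    exact key (hq.comul h)
  rw [hinput]
  have MAPEQr : ∀ s : (H ⊗[k] H) ⊗[k] H,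
      EVr F G (((A2 (k := k) (H := H)).rTensor (U ⊗[k] V))
          ((TensorProduct.map ((gchain hq).rTensor H) D) s))
        = K0' ((D.lTensor (H ⊗[k] H)) s) := by
    intro s
    induction s using TensorProduct.induction_on with
    | zero => simp
    | add s₁ s₂ h₁ h₂ => simp only [map_add, h₁, h₂]
    | tmul t e =>
      rw [TensorProduct.map_tmul, LinearMap.lTensor_tmul]
      induction t using TensorProduct.induction_on with
      | zero => simp
      | add t₁ t₂ h₁ h₂ => simp only [map_add, TensorProduct.add_tmul, TensorProduct.tmul_add, h₁, h₂]
      | tmul x z =>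
        -- now: EVr (A2.rTensor ((gchain x ⊗ z) ⊗ (D e))) = K0' ((x⊗z) ⊗ D e)
        have subB : ∀ r' : U ⊗[k] V,
            EVr F G ((A2 (k := k) (H := H) ((gchain hq x) ⊗ₜ[k] z)) ⊗ₜ[k] r')
              = K0' ((x ⊗ₜ[k] z) ⊗ₜ[k] r') := by
          intro r'
          induction r' using TensorProduct.induction_on with
          | zero => simp
          | add r₁ r₂ h₁ h₂ => simp only [map_add, TensorProduct.tmul_add, h₁, h₂]
          | tmul u v =>
            have subC : ∀ q : H ⊗[k] (H ⊗[k] H),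
                EVr F G ((A2 (k := k) (H := H) (q ⊗ₜ[k] z)) ⊗ₜ[k] (u ⊗ₜ[k] v))
                  = (TensorProduct.map ((Fat F u).flip z)
                      (TensorProduct.lift (Fat G v))) q := by
              intro q
              induction q using TensorProduct.induction_on with
              | zero => simp
              | add q₁ q₂ h₁ h₂ => simp only [map_add, TensorProduct.add_tmul, h₁, h₂]
              | tmul x' w =>
                induction w using TensorProduct.induction_on with
                | zero => simp [TensorProduct.tmul_zero]
                | add w₁ w₂ hw₁ hw₂ =>
                    simp only [map_add, TensorProduct.add_tmul, TensorProduct.tmul_add, hw₁, hw₂]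
                | tmul c d =>
                  rw [A2_tmul, EVr_tmul]
                  simp
            rw [subC (gchain hq x)]
            have e2 : (TensorProduct.map ((Fat F u).flip z)
                  (TensorProduct.lift (Fat G v))) (gchain hq x)
                = (TensorProduct.map ((Fat F u).flip z)
                    ((TensorProduct.lift (Fat G v)) ∘ₗ hq.comul)) (hq.comul x) := by
              simp only [gchain, LinearMap.comp_apply]
              rw [← LinearMap.comp_apply (TensorProduct.map _ _),
                LinearMap.map_comp_lTensor]
            have e3 : (TensorProduct.lift (Fat G v)) ∘ₗ hq.comul
                = hq.counit.smulRight (G0 v) :=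
              LinearMap.ext fun w => by simp [hG v w]
            rw [e2, e3, counit_pull, subD]
            all_goals simp
        simp only [LinearMap.rTensor_tmul]
        rw [subB (D e)]
  rw [MAPEQr ((hq.comul.rTensor H) (hq.comul h))]
  have hDl : (D.lTensor (H ⊗[k] H)) ((hq.comul.rTensor H) (hq.comul h))
      = (TensorProduct.map hq.comul D) (hq.comul h) := by
    rw [← LinearMap.comp_apply, LinearMap.lTensor_comp_rTensor]
  rw [hDl]
  have FIN : ∀ (a : H) (r' : U ⊗[k] V),
      K0' ((hq.comul a) ⊗ₜ[k] r') = hq.counit a • ((TensorProduct.map F0 G0) r') := by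
    intro a r'
    induction r' using TensorProduct.induction_on with
    | zero => simp
    | add r₁ r₂ h₁ h₂ => simp only [map_add, TensorProduct.tmul_add, h₁, h₂, smul_add]
    | tmul u v =>
      rw [subD, hF u a, TensorProduct.map_tmul, TensorProduct.smul_tmul']
  have W5 : K0' ∘ₗ (TensorProduct.map hq.comul D)
      = (TensorProduct.map F0 G0) ∘ₗ D ∘ₗ (TensorProduct.lid k H).toLinearMap
          ∘ₗ (hq.counit.rTensor H) := by
    apply TensorProduct.ext'
    intro a b
    simp only [LinearMap.comp_apply, TensorProduct.map_tmul, LinearMap.rTensor_tmul,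
      LinearEquiv.coe_coe, TensorProduct.lid_tmul, map_smul]
    rw [FIN a (D b)]
  have := congrArg (fun f => f (hq.comul h)) W5
  simp only [LinearMap.comp_apply, LinearEquiv.coe_coe] at this
  rw [this, hq.counit_comul h]
end

section
variable {hq : HopfQuasigroup k H}

/-- the trilinear map `(x, z, u) ↦ S(x)(z u)` -/
noncomputable def Ftri (hq : HopfQuasigroup k H) : H →ₗ[k] H →ₗ[k] H →ₗ[k] H :=
  ((LinearMap.llcomp k H H H).comp (hq.mul.comp hq.antipode)).compl₂ hq.mul

@[simp] lemma Ftri_apply (x z u : H) :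
    Ftri hq x z u = hq.mul (hq.antipode x) (hq.mul z u) := rfl

lemma Ftri_collapse : ∀ (u w : H),
    TensorProduct.lift (Fat (Ftri hq) u) (hq.comul w) = hq.counit w • (LinearMap.id : H →ₗ[k] H) u := by
  intro u w
  have e : Fat (Ftri hq) u = (hq.mul.comp hq.antipode).compl₂ (hq.mul.flip u) := by
    apply LinearMap.ext; intro x; apply LinearMap.ext; intro z
    simp
  rw [e]
  simpa using hq.antipode_mul_left u w

/-- The antipode of a Hopf quasigroup is anticomultiplicative:
`Δ(S h) = S(h₂) ⊗ S(h₁)`. -/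
lemma anticomul (h : H) :
    hq.comul (hq.antipode h)
      = (TensorProduct.comm k H H) (TensorProduct.map hq.antipode hq.antipode (hq.comul h)) := by
  set commL : H ⊗[k] H →ₗ[k] H ⊗[k] H := (TensorProduct.comm k H H).toLinearMap with hcommL
  have commL_apply : ∀ x : H ⊗[k] H, commL x = (TensorProduct.comm k H H) x := fun _ => rfl
  have commL_invol : ∀ x : H ⊗[k] H, commL (commL x) = x := by
    intro x
    induction x using TensorProduct.induction_on with
    | zero => simp
    | add a b ha hb => simp only [map_add, ha, hb]
    | tmul a b => simp [hcommL]
  set XX : H →ₗ[k] H ⊗[k] H :=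
    commL ∘ₗ (TensorProduct.map hq.antipode hq.antipode) ∘ₗ hq.comul with hXX
  set g : H →ₗ[k] H ⊗[k] H :=
    hq.comul ∘ₗ (muH hq) ∘ₗ (hq.antipode.lTensor H) ∘ₗ hq.comul with hg
  -- Step A : X h = M2 (map X g (Δ h))
  have gval : ∀ b : H, g b = hq.counit b • (hq.one ⊗ₜ[k] hq.one) := by
    intro b
    rw [hg]
    simp only [LinearMap.comp_apply]
    rw [mul_antipode_one b, map_smul, hq.comul_one]
  have e1 : ∀ t : H ⊗[k] H,
      M2 hq ((TensorProduct.map XX g) t)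
        = XX ((TensorProduct.rid k H) ((hq.counit.lTensor H) t)) := by
    intro t
    induction t using TensorProduct.induction_on with
    | zero => simp
    | add a b ha hb => simp only [map_add, ha, hb]
    | tmul a b =>
      rw [TensorProduct.map_tmul, gval b, TensorProduct.tmul_smul, map_smul, M2_one]
      rw [LinearMap.lTensor_tmul, TensorProduct.rid_tmul, map_smul]
  have stepA : XX h = M2 hq ((TensorProduct.map XX g) (hq.comul h)) := by
    rw [e1 (hq.comul h), hq.comul_counit h]
  -- Step B : rewrite map X g (Δ h) into the canonical GILr input
  have B1 : g = (M2 hq ∘ₗ (TensorProduct.map hq.comul (hq.comul ∘ₗ hq.antipode))) ∘ₗ hq.comul := by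
    have : ∀ t : H ⊗[k] H,
        hq.comul ((muH hq) ((hq.antipode.lTensor H) t))
          = M2 hq ((TensorProduct.map hq.comul (hq.comul ∘ₗ hq.antipode)) t) := by
      intro t
      induction t using TensorProduct.induction_on with
      | zero => simp
      | add a b ha hb => simp only [map_add, ha, hb]
      | tmul x y =>
        rw [LinearMap.lTensor_tmul, muH_tmul, hq.comul_mul x (hq.antipode y)]
        simp only [TensorProduct.map_tmul, M2, LinearMap.comp_apply, LinearEquiv.coe_coe,
          LinearMap.coe_comp, Function.comp_apply]
        rfl
    apply LinearMap.ext; intro b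
    rw [hg]
    simp only [LinearMap.comp_apply]
    rw [this (hq.comul b)]
  set D0 : H →ₗ[k] H ⊗[k] H := hq.comul ∘ₗ hq.antipode with hD0
  set CC : H ⊗[k] H →ₗ[k] H ⊗[k] H :=
    commL ∘ₗ (TensorProduct.map hq.antipode hq.antipode) with hCC
  set G2 : H ⊗[k] H →ₗ[k] H ⊗[k] H :=
    M2 hq ∘ₗ (TensorProduct.map hq.comul D0) with hG2
  have hXXC : XX = CC ∘ₗ hq.comul := by
    rw [hXX, hCC, LinearMap.comp_assoc]
  have B2 : TensorProduct.map XX g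
      = (TensorProduct.map CC G2) ∘ₗ (TensorProduct.map hq.comul hq.comul) := by
    rw [hXXC, B1, hG2, ← TensorProduct.map_comp]
  have B3 : TensorProduct.map CC G2
      = (TensorProduct.map CC (M2 hq)) ∘ₗ
          (TensorProduct.map LinearMap.id (TensorProduct.map hq.comul D0)) := by
    rw [hG2, ← TensorProduct.map_comp, LinearMap.comp_id]
  -- INS : regroup the element
  have hE5' : (TensorProduct.map ((TensorProduct.map hq.comul hq.comul) ∘ₗ hq.comul) D0)
        (hq.comul h)
      = (TensorProduct.map (TensorProduct.map hq.comul hq.comul) D0)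
          ((hq.comul.rTensor H) (hq.comul h)) := by
    have e := LinearMap.map_comp_rTensor (f := TensorProduct.map hq.comul hq.comul)
      (g := D0) (f' := hq.comul)
    have := congrArg (fun φ => φ (hq.comul h)) e
    simp only [LinearMap.comp_apply] at this
    exact this.symm
  have NATD : ∀ s : (H ⊗[k] H) ⊗[k] H,
      (TensorProduct.assoc k (H ⊗[k] H) (H ⊗[k] H) (H ⊗[k] H))
          ((TensorProduct.map (TensorProduct.map hq.comul hq.comul) D0) s)
        = (TensorProduct.map hq.comul (TensorProduct.map hq.comul D0))
            ((TensorProduct.assoc k H H H) s) := by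
    intro s
    induction s using TensorProduct.induction_on with
    | zero => simp
    | add a b ha hb => simp only [map_add, ha, hb]
    | tmul t e =>
      induction t using TensorProduct.induction_on with
      | zero => simp
      | add a b ha hb => simp only [map_add, TensorProduct.add_tmul, ha, hb]
      | tmul x y =>
        simp only [TensorProduct.map_tmul, TensorProduct.assoc_tmul]
  have INS : (TensorProduct.map LinearMap.id (TensorProduct.map hq.comul D0))
        ((TensorProduct.map hq.comul hq.comul) (hq.comul h))
      = (TensorProduct.assoc k (H ⊗[k] H) (H ⊗[k] H) (H ⊗[k] H))
          ((TensorProduct.map ((TensorProduct.map hq.comul hq.comul) ∘ₗ hq.comul) D0)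
            (hq.comul h)) := by
    rw [hE5', NATD ((hq.comul.rTensor H) (hq.comul h)), hq.coassoc h]
    have lhs_eq : (TensorProduct.map LinearMap.id (TensorProduct.map hq.comul D0))
          ∘ₗ (TensorProduct.map hq.comul hq.comul)
        = (TensorProduct.map hq.comul (TensorProduct.map hq.comul D0)) ∘ₗ
            (hq.comul.lTensor H) := by
      rw [← TensorProduct.map_comp, LinearMap.id_comp, LinearMap.lTensor,
        ← TensorProduct.map_comp, LinearMap.comp_id]
    have := congrArg (fun f => f (hq.comul h)) lhs_eq
    simp only [LinearMap.comp_apply] at this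
    rw [this]
  -- EVMATCH
  have EVMATCH : ∀ E : ((H ⊗[k] H) ⊗[k] (H ⊗[k] H)) ⊗[k] (H ⊗[k] H),
      M2 hq ((TensorProduct.map CC (M2 hq))
          ((TensorProduct.assoc k (H ⊗[k] H) (H ⊗[k] H) (H ⊗[k] H)) E))
        = commL ((EVr (Ftri hq) (Ftri hq)) ((commL.lTensor ((H ⊗[k] H) ⊗[k] (H ⊗[k] H))) E)) := by
    intro E
    induction E using TensorProduct.induction_on with
    | zero => simp
    | add a b ha hb => simp only [map_add, ha, hb]
    | tmul q r =>
      induction q using TensorProduct.induction_on with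
      | zero => simp
      | add a b ha hb => simp only [map_add, TensorProduct.add_tmul, ha, hb]
      | tmul q₁ q₂ =>
        induction q₁ using TensorProduct.induction_on with
        | zero => simp [TensorProduct.zero_tmul]
        | add a b ha hb => simp only [map_add, TensorProduct.add_tmul, ha, hb]
        | tmul x₁ x₂ =>
          induction q₂ using TensorProduct.induction_on with
          | zero => simp [TensorProduct.zero_tmul, TensorProduct.tmul_zero]
          | add a b ha hb => simp only [map_add, TensorProduct.add_tmul,
              TensorProduct.tmul_add, ha, hb]
          | tmul y₁ y₂ =>
            induction r using TensorProduct.induction_on with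
            | zero => simp [TensorProduct.tmul_zero]
            | add a b ha hb => simp only [map_add, TensorProduct.tmul_add, ha, hb]
            | tmul u v =>
              simp only [TensorProduct.assoc_tmul, LinearMap.lTensor_tmul, hcommL,
                LinearEquiv.coe_coe, TensorProduct.comm_tmul, EVr_tmul,
                TensorProduct.map_tmul, hCC, LinearMap.comp_apply, M2_tmul, Ftri_apply]
  -- put everything together
  have swapD : (commL.lTensor ((H ⊗[k] H) ⊗[k] (H ⊗[k] H)))
        ((TensorProduct.map ((TensorProduct.map hq.comul hq.comul) ∘ₗ hq.comul) D0)
          (hq.comul h))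
      = (TensorProduct.map ((TensorProduct.map hq.comul hq.comul) ∘ₗ hq.comul)
            (commL ∘ₗ D0)) (hq.comul h) := by
    rw [← LinearMap.comp_apply, LinearMap.lTensor, ← TensorProduct.map_comp,
      LinearMap.id_comp]
  have hGILr := GILr (hq := hq) (Ftri hq) (Ftri hq) LinearMap.id LinearMap.id
    (commL ∘ₗ D0) (fun u w => Ftri_collapse u w) (fun v w => Ftri_collapse v w) h
  have final : XX h = commL (commL (D0 h)) := by
    rw [stepA]
    have := congrArg (fun f => f (hq.comul h)) B2
    simp only [LinearMap.comp_apply] at this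
    rw [this]
    have := congrArg (fun f => f ((TensorProduct.map hq.comul hq.comul) (hq.comul h))) B3
    simp only [LinearMap.comp_apply] at this
    rw [this, INS, EVMATCH, swapD, hGILr]
    simp
  rw [hD0] at final
  simp only [LinearMap.comp_apply] at final
  rw [commL_invol] at final
  rw [← final, hXX]
  simp only [LinearMap.comp_apply]
  rfl


end

end TLaux



namespace TLaux
open LinearMap

variable {k H : Type*} [Field k] [AddCommMonoid H] [Module k H]
variable {hq : HopfQuasigroup k H}
variable {M N : Type*} [AddCommMonoid M] [Module k M] [AddCommMonoid N] [Module k N]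

lemma htH_lemma (qm : LeftQuasimodule hq M) (qn : LeftQuasimodule hq N) (m : M) (n : N)
    (t : H ⊗[k] H) :
    (TensorProduct.homTensorHomMap (RingHom.id k) M N M N) ((TensorProduct.map qm.act qn.act) t) (m ⊗ₜ[k] n)
      = (TensorProduct.map (qm.act.flip m) (qn.act.flip n)) t := by
  induction t using TensorProduct.induction_on with
  | zero => simp
  | add a b ha hb => simp only [map_add, LinearMap.add_apply, ha, hb]
  | tmul x y => simp

lemma diagAct_apply (qm : LeftQuasimodule hq M) (qn : LeftQuasimodule hq N) (x : H)
    (m : M) (n : N) :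
    diagAct qm qn x (m ⊗ₜ[k] n)
      = (TensorProduct.map (qm.act.flip m) (qn.act.flip n)) (hq.comul x) := by
  simp only [diagAct, LinearMap.comp_apply]
  exact htH_lemma qm qn m n (hq.comul x)

lemma tensor_act_one (qm : LeftQuasimodule hq M) (qn : LeftQuasimodule hq N)
    (p : M ⊗[k] N) : diagAct qm qn hq.one p = p := by
  have e : diagAct qm qn hq.one = LinearMap.id := by
    simp only [diagAct, LinearMap.comp_apply, hq.comul_one, TensorProduct.map_tmul]
    have h1 : qm.act hq.one = LinearMap.id := LinearMap.ext fun m => qm.act_one m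
    have h2 : qn.act hq.one = LinearMap.id := LinearMap.ext fun n => qn.act_one n
    rw [h1, h2]
    simp
  rw [e]; rfl

lemma Omega_red (F G : H →ₗ[k] (M ⊗[k] N) →ₗ[k] (M ⊗[k] N)) (t : H ⊗[k] H) (p : M ⊗[k] N) :
    TensorProduct.lift (F.compl₂ (G.flip p)) t
      = TensorProduct.lift
          (((LinearMap.llcomp k (M ⊗[k] N) (M ⊗[k] N) (M ⊗[k] N)).comp F).compl₂ G) t p := by
  induction t using TensorProduct.induction_on with
  | zero => simp
  | add a b ha hb => simp only [map_add, LinearMap.add_apply, ha, hb]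
  | tmul x y => simp

lemma tensor_act_antipode (qm : LeftQuasimodule hq M) (qn : LeftQuasimodule hq N)
    (h : H) (p : M ⊗[k] N) :
    TensorProduct.lift ((diagAct qm qn).compl₂
        (((diagAct qm qn).comp hq.antipode).flip p)) (hq.comul h)
      = hq.counit h • p := by
  rw [Omega_red]
  induction p using TensorProduct.induction_on with
  | zero => simp
  | add p q hp hq' => simp only [map_add, smul_add, hp, hq']
  | tmul m n =>
    set b₁ : H →ₗ[k] H →ₗ[k] M :=
      qm.act.compl₂ ((qm.act.comp hq.antipode).flip m) with hb₁
    set b₂ : H →ₗ[k] H →ₗ[k] N :=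
      qn.act.compl₂ ((qn.act.comp hq.antipode).flip n) with hb₂
    have key : ∀ t : H ⊗[k] H,
        TensorProduct.lift
            (((LinearMap.llcomp k (M ⊗[k] N) (M ⊗[k] N) (M ⊗[k] N)).comp
              (diagAct qm qn)).compl₂ ((diagAct qm qn).comp hq.antipode)) t (m ⊗ₜ[k] n)
          = (TensorProduct.map (TensorProduct.lift b₁) (TensorProduct.lift b₂))
              (sigma0 (k := k) (H := H) ((TensorProduct.map hq.comul hq.comul) t)) := by
      intro t
      induction t using TensorProduct.induction_on with
      | zero => simp
      | add a b ha hb => simp only [map_add, LinearMap.add_apply, ha, hb]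
      | tmul x y =>
        have lhs1 : TensorProduct.lift
            (((LinearMap.llcomp k (M ⊗[k] N) (M ⊗[k] N) (M ⊗[k] N)).comp
              (diagAct qm qn)).compl₂ ((diagAct qm qn).comp hq.antipode)) (x ⊗ₜ[k] y)
                (m ⊗ₜ[k] n)
            = diagAct qm qn x (diagAct qm qn (hq.antipode y) (m ⊗ₜ[k] n)) := by
          simp
        rw [lhs1, diagAct_apply, anticomul y]
        have inner : ∀ ty : H ⊗[k] H,
            diagAct qm qn x ((TensorProduct.map (qm.act.flip m) (qn.act.flip n))
                ((TensorProduct.comm k H H) ((TensorProduct.map hq.antipode hq.antipode) ty)))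
              = (TensorProduct.map (TensorProduct.lift b₁) (TensorProduct.lift b₂))
                  (sigma0 (k := k) (H := H) ((hq.comul x) ⊗ₜ[k] ty)) := by
          intro ty
          induction ty using TensorProduct.induction_on with
          | zero => simp
          | add a b ha hb => simp only [map_add, TensorProduct.tmul_add, ha, hb]
          | tmul c d =>
            rw [TensorProduct.map_tmul, TensorProduct.comm_tmul, TensorProduct.map_tmul,
              diagAct_apply]
            have rhs1 : sigma0 (k := k) (H := H) ((hq.comul x) ⊗ₜ[k] (c ⊗ₜ[k] d))
                = (TensorProduct.tensorTensorTensorComm k H H H H)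
                    ((hq.comul x) ⊗ₜ[k] (d ⊗ₜ[k] c)) := by
              simp [sigma0]
            rw [rhs1]
            have CAN2 : ∀ tx : H ⊗[k] H,
                (TensorProduct.map (qm.act.flip (qm.act (hq.antipode d) m))
                    (qn.act.flip (qn.act (hq.antipode c) n))) tx
                  = (TensorProduct.map (TensorProduct.lift b₁) (TensorProduct.lift b₂))
                      ((TensorProduct.tensorTensorTensorComm k H H H H)
                        (tx ⊗ₜ[k] (d ⊗ₜ[k] c))) := by
              intro tx
              induction tx using TensorProduct.induction_on with
              | zero => simp
              | add a b ha hb => simp only [map_add, TensorProduct.add_tmul, ha, hb]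
              | tmul p q => simp [hb₁, hb₂]
            exact CAN2 (hq.comul x)
        rw [inner (hq.comul y), TensorProduct.map_tmul]
    rw [key (hq.comul h)]
    exact GIL0 b₁ b₂ m n (fun w => qm.act_antipode w m) (fun w => qn.act_antipode w n) h

lemma tensor_antipode_act (qm : LeftQuasimodule hq M) (qn : LeftQuasimodule hq N)
    (h : H) (p : M ⊗[k] N) :
    TensorProduct.lift (((diagAct qm qn).comp hq.antipode).compl₂
        ((diagAct qm qn).flip p)) (hq.comul h)
      = hq.counit h • p := by
  rw [Omega_red]
  induction p using TensorProduct.induction_on with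
  | zero => simp
  | add p q hp hq' => simp only [map_add, smul_add, hp, hq']
  | tmul m n =>
    set bn : H →ₗ[k] H →ₗ[k] N :=
      (qn.act.comp hq.antipode).compl₂ (qn.act.flip n) with hbn
    set bm : H →ₗ[k] H →ₗ[k] M :=
      (qm.act.comp hq.antipode).compl₂ (qm.act.flip m) with hbm
    have key : ∀ t : H ⊗[k] H,
        TensorProduct.lift
            (((LinearMap.llcomp k (M ⊗[k] N) (M ⊗[k] N) (M ⊗[k] N)).comp
              ((diagAct qm qn).comp hq.antipode)).compl₂ (diagAct qm qn)) t (m ⊗ₜ[k] n)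
          = (TensorProduct.comm k N M)
              ((TensorProduct.map (TensorProduct.lift bn) (TensorProduct.lift bm))
                (sigma0 (k := k) (H := H) ((TensorProduct.map hq.comul hq.comul) t))) := by
      intro t
      induction t using TensorProduct.induction_on with
      | zero => simp
      | add a b ha hb => simp only [map_add, LinearMap.add_apply, ha, hb]
      | tmul x y =>
        have lhs1 : TensorProduct.lift
            (((LinearMap.llcomp k (M ⊗[k] N) (M ⊗[k] N) (M ⊗[k] N)).comp
              ((diagAct qm qn).comp hq.antipode)).compl₂ (diagAct qm qn)) (x ⊗ₜ[k] y)
                (m ⊗ₜ[k] n)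
            = diagAct qm qn (hq.antipode x) (diagAct qm qn y (m ⊗ₜ[k] n)) := by
          simp
        rw [lhs1, diagAct_apply qm qn y m n]
        have inner : ∀ ty : H ⊗[k] H,
            diagAct qm qn (hq.antipode x)
                ((TensorProduct.map (qm.act.flip m) (qn.act.flip n)) ty)
              = (TensorProduct.comm k N M)
                  ((TensorProduct.map (TensorProduct.lift bn) (TensorProduct.lift bm))
                    (sigma0 (k := k) (H := H) ((hq.comul x) ⊗ₜ[k] ty))) := by
          intro ty
          induction ty using TensorProduct.induction_on with
          | zero => simp
          | add a b ha hb => simp only [map_add, TensorProduct.tmul_add, ha, hb]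
          | tmul c d =>
            rw [TensorProduct.map_tmul, diagAct_apply, anticomul x]
            have rhs1 : sigma0 (k := k) (H := H) ((hq.comul x) ⊗ₜ[k] (c ⊗ₜ[k] d))
                = (TensorProduct.tensorTensorTensorComm k H H H H)
                    ((hq.comul x) ⊗ₜ[k] (d ⊗ₜ[k] c)) := by
              simp [sigma0]
            rw [rhs1]
            have CBN2 : ∀ tx : H ⊗[k] H,
                (TensorProduct.map (qm.act.flip (qm.act c m)) (qn.act.flip (qn.act d n)))
                    ((TensorProduct.comm k H H)
                      ((TensorProduct.map hq.antipode hq.antipode) tx))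
                  = (TensorProduct.comm k N M)
                      ((TensorProduct.map (TensorProduct.lift bn) (TensorProduct.lift bm))
                        ((TensorProduct.tensorTensorTensorComm k H H H H)
                          (tx ⊗ₜ[k] (d ⊗ₜ[k] c)))) := by
              intro tx
              induction tx using TensorProduct.induction_on with
              | zero => simp
              | add a b ha hb => simp only [map_add, TensorProduct.add_tmul, ha, hb]
              | tmul p q => simp [hbn, hbm]
            exact CBN2 (hq.comul x)
        rw [inner (hq.comul y), TensorProduct.map_tmul]
    rw [key (hq.comul h)]
    rw [GIL0 bn bm n m (fun w => qn.antipode_act w n) (fun w => qm.antipode_act w m) h]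
    simp

end TLaux


namespace TLaux
open LinearMap

variable {k H : Type*} [Field k] [AddCommMonoid H] [Module k H]
variable {hq : HopfQuasigroup k H}
variable {M N : Type*} [AddCommMonoid M] [Module k M] [AddCommMonoid N] [Module k N]

noncomputable def Phi0 (hq : HopfQuasigroup k H) (M N : Type*)
    [AddCommMonoid M] [Module k M] [AddCommMonoid N] [Module k N] :
    (M ⊗[k] H) ⊗[k] (N ⊗[k] H) →ₗ[k] (M ⊗[k] N) ⊗[k] H :=
  ((muH hq).lTensor (M ⊗[k] N)) ∘ₗ (TensorProduct.tensorTensorTensorComm k M H N H).toLinearMap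

lemma Phi0_tmul (m' : M) (a : H) (n' : N) (b : H) :
    Phi0 hq M N ((m' ⊗ₜ[k] a) ⊗ₜ[k] (n' ⊗ₜ[k] b)) = (m' ⊗ₜ[k] n') ⊗ₜ[k] (hq.mul a b) := by
  simp [Phi0, muH]

lemma rho_tmul (lm : LongDimodule hq M) (ln : LongDimodule hq N) (m : M) (n : N) :
    codiagCoact lm ln (m ⊗ₜ[k] n) = Phi0 hq M N ((lm.coact m) ⊗ₜ[k] (ln.coact n)) := by
  simp [codiagCoact, Phi0, muH]

lemma assoc_tmul_right {A : Type*} [AddCommMonoid A] [Module k A] (Q : A ⊗[k] H) (c : H) :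
    (TensorProduct.assoc k A H H) (Q ⊗ₜ[k] c)
      = (((TensorProduct.mk k H H).flip c).lTensor A) Q := by
  induction Q using TensorProduct.induction_on with
  | zero => simp
  | add a b ha hb => simp only [map_add, TensorProduct.add_tmul, ha, hb]
  | tmul p d => simp

noncomputable def Psi (hq : HopfQuasigroup k H) (M N : Type*)
    [AddCommMonoid M] [Module k M] [AddCommMonoid N] [Module k N] :
    (M ⊗[k] (H ⊗[k] H)) ⊗[k] (N ⊗[k] (H ⊗[k] H)) →ₗ[k] (M ⊗[k] N) ⊗[k] (H ⊗[k] H) :=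
  ((M2 hq).lTensor (M ⊗[k] N)) ∘ₗ
    (TensorProduct.tensorTensorTensorComm k M (H ⊗[k] H) N (H ⊗[k] H)).toLinearMap

lemma tensor_coassoc (lm : LongDimodule hq M) (ln : LongDimodule hq N) (p : M ⊗[k] N) :
    (TensorProduct.assoc k (M ⊗[k] N) H H)
        (((codiagCoact lm ln).rTensor H) (codiagCoact lm ln p))
      = (LinearMap.lTensor (M ⊗[k] N) hq.comul) (codiagCoact lm ln p) := by
  induction p using TensorProduct.induction_on with
  | zero => simp
  | add p q hp hq' => simp only [map_add, hp, hq']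
  | tmul m n =>
    have core : ∀ (a b : H) (u' : M ⊗[k] H) (v' : N ⊗[k] H),
        ((((TensorProduct.mk k H H).flip (hq.mul a b)).lTensor (M ⊗[k] N))
            (Phi0 hq M N (u' ⊗ₜ[k] v')))
          = Psi hq M N (((((TensorProduct.mk k H H).flip a).lTensor M) u') ⊗ₜ[k]
              ((((TensorProduct.mk k H H).flip b).lTensor N) v')) := by
      intro a b u' v'
      induction u' using TensorProduct.induction_on with
      | zero => simp
      | add s t hs ht => simp only [map_add, TensorProduct.add_tmul, hs, ht]
      | tmul m₀ x =>
        induction v' using TensorProduct.induction_on with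
        | zero => simp
        | add s t hs ht => simp only [map_add, TensorProduct.add_tmul,
            TensorProduct.tmul_add, hs, ht]
        | tmul n₀ y =>
          rw [Phi0_tmul]
          simp only [LinearMap.lTensor_tmul, LinearMap.flip_apply, TensorProduct.mk_apply,
            Psi, LinearMap.comp_apply, LinearEquiv.coe_coe,
            TensorProduct.tensorTensorTensorComm_tmul, M2_tmul]
    have L1 : ∀ (u : M ⊗[k] H) (v : N ⊗[k] H),
        (TensorProduct.assoc k (M ⊗[k] N) H H)
            (((codiagCoact lm ln).rTensor H) (Phi0 hq M N (u ⊗ₜ[k] v)))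
          = Psi hq M N (((TensorProduct.assoc k M H H) ((lm.coact.rTensor H) u)) ⊗ₜ[k]
              ((TensorProduct.assoc k N H H) ((ln.coact.rTensor H) v))) := by
      intro u v
      induction u using TensorProduct.induction_on with
      | zero => simp
      | add s t hs ht => simp only [map_add, TensorProduct.add_tmul, hs, ht]
      | tmul m' a =>
        induction v using TensorProduct.induction_on with
        | zero => simp
        | add s t hs ht => simp only [map_add, TensorProduct.add_tmul,
            TensorProduct.tmul_add, hs, ht]
        | tmul n' b =>
          rw [Phi0_tmul, LinearMap.rTensor_tmul, rho_tmul, assoc_tmul_right,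
            LinearMap.rTensor_tmul, LinearMap.rTensor_tmul, assoc_tmul_right,
            assoc_tmul_right]
          exact core a b (lm.coact m') (ln.coact n')
    have R1 : ∀ (u : M ⊗[k] H) (v : N ⊗[k] H),
        (LinearMap.lTensor (M ⊗[k] N) hq.comul) (Phi0 hq M N (u ⊗ₜ[k] v))
          = Psi hq M N (((hq.comul.lTensor M) u) ⊗ₜ[k] ((hq.comul.lTensor N) v)) := by
      intro u v
      induction u using TensorProduct.induction_on with
      | zero => simp
      | add s t hs ht => simp only [map_add, TensorProduct.add_tmul, hs, ht]
      | tmul m' a =>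
        induction v using TensorProduct.induction_on with
        | zero => simp
        | add s t hs ht => simp only [map_add, TensorProduct.add_tmul,
            TensorProduct.tmul_add, hs, ht]
        | tmul n' b =>
          rw [Phi0_tmul, LinearMap.lTensor_tmul]
          have hmul : hq.comul (hq.mul a b)
              = M2 hq ((TensorProduct.map hq.comul hq.comul) (a ⊗ₜ[k] b)) := by
            have := congrArg (fun f => f (a ⊗ₜ[k] b)) (comul_mul_map (hq := hq))
            simp only [LinearMap.comp_apply, muH_tmul] at this
            exact this
          rw [hmul]
          simp [Psi]
    rw [rho_tmul, L1 (lm.coact m) (ln.coact n), lm.coassoc m, ln.coassoc n,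
      ← R1 (lm.coact m) (ln.coact n)]

lemma tensor_coact_counit (lm : LongDimodule hq M) (ln : LongDimodule hq N) (p : M ⊗[k] N) :
    (TensorProduct.rid k (M ⊗[k] N))
        ((LinearMap.lTensor (M ⊗[k] N) hq.counit) (codiagCoact lm ln p)) = p := by
  induction p using TensorProduct.induction_on with
  | zero => simp
  | add p q hp hq' => simp only [map_add, hp, hq']
  | tmul m n =>
    have core : ∀ (u : M ⊗[k] H) (v : N ⊗[k] H),
        (TensorProduct.rid k (M ⊗[k] N))
            ((hq.counit.lTensor (M ⊗[k] N)) (Phi0 hq M N (u ⊗ₜ[k] v)))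
          = ((TensorProduct.rid k M) ((hq.counit.lTensor M) u)) ⊗ₜ[k]
            ((TensorProduct.rid k N) ((hq.counit.lTensor N) v)) := by
      intro u v
      induction u using TensorProduct.induction_on with
      | zero => simp
      | add s t hs ht => simp only [map_add, TensorProduct.add_tmul, hs, ht]
      | tmul m' a =>
        induction v using TensorProduct.induction_on with
        | zero => simp
        | add s t hs ht => simp only [map_add, TensorProduct.add_tmul,
            TensorProduct.tmul_add, hs, ht]
        | tmul n' b =>
          rw [Phi0_tmul]
          simp only [LinearMap.lTensor_tmul, TensorProduct.rid_tmul, hq.counit_mul]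
          rw [mul_smul, ← TensorProduct.tmul_smul, TensorProduct.smul_tmul']
    rw [rho_tmul, core (lm.coact m) (ln.coact n), lm.coact_counit m, ln.coact_counit n]

lemma tensor_compat (lm : LongDimodule hq M) (ln : LongDimodule hq N) (h : H)
    (p : M ⊗[k] N) :
    codiagCoact lm ln (diagAct lm.toLeftQuasimodule ln.toLeftQuasimodule h p)
      = ((diagAct lm.toLeftQuasimodule ln.toLeftQuasimodule h).rTensor H)
          (codiagCoact lm ln p) := by
  induction p using TensorProduct.induction_on with
  | zero => simp
  | add p q hp hq' => simp only [map_add, hp, hq']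
  | tmul m n =>
    have c2 : ∀ (f : M →ₗ[k] M) (g : N →ₗ[k] N) (u : M ⊗[k] H) (v : N ⊗[k] H),
        Phi0 hq M N (((f.rTensor H) u) ⊗ₜ[k] ((g.rTensor H) v))
          = ((TensorProduct.map f g).rTensor H) (Phi0 hq M N (u ⊗ₜ[k] v)) := by
      intro f g u v
      induction u using TensorProduct.induction_on with
      | zero => simp
      | add s t hs ht => simp only [map_add, TensorProduct.add_tmul, hs, ht]
      | tmul m' a =>
        induction v using TensorProduct.induction_on with
        | zero => simp
        | add s t hs ht => simp only [map_add, TensorProduct.add_tmul,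
            TensorProduct.tmul_add, hs, ht]
        | tmul n' b =>
          simp only [LinearMap.rTensor_tmul, Phi0_tmul, TensorProduct.map_tmul]
    have main : ∀ t : H ⊗[k] H,
        codiagCoact lm ln ((TensorProduct.homTensorHomMap (RingHom.id k) M N M N)
            ((TensorProduct.map lm.act ln.act) t) (m ⊗ₜ[k] n))
          = (((TensorProduct.homTensorHomMap (RingHom.id k) M N M N)
              ((TensorProduct.map lm.act ln.act) t)).rTensor H)
                (codiagCoact lm ln (m ⊗ₜ[k] n)) := by
      intro t
      induction t using TensorProduct.induction_on with
      | zero => simp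
      | add a b ha hb => simp only [map_add, LinearMap.add_apply, LinearMap.rTensor_add,
          ha, hb]
      | tmul x y =>
        simp only [TensorProduct.map_tmul, TensorProduct.homTensorHomMap_apply]
        rw [rho_tmul, lm.compat x m, ln.compat y n,
          c2 (lm.act x) (ln.act y) (lm.coact m) (ln.coact n), ← rho_tmul]
    exact main (hq.comul h)

end TLaux


/-- If `M` and `N` are Long dimodules over a Hopf quasigroup `H`, then `M ⊗ N` with the
diagonal action and the codiagonal coaction is a Long dimodule. -/
theorem tensor_longDimodule {hq : HopfQuasigroup k H} {M N : Type*}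
    [AddCommMonoid M] [Module k M] [AddCommMonoid N] [Module k N]
    (lm : LongDimodule hq M) (ln : LongDimodule hq N) :
    ∃ ld : LongDimodule hq (M ⊗[k] N),
      ld.act = diagAct lm.toLeftQuasimodule ln.toLeftQuasimodule ∧
      ld.coact = codiagCoact lm ln := by
  refine ⟨{ act := diagAct lm.toLeftQuasimodule ln.toLeftQuasimodule,
            act_one := fun p => TLaux.tensor_act_one _ _ p,
            act_antipode := fun h p => TLaux.tensor_act_antipode _ _ h p,
            antipode_act := fun h p => TLaux.tensor_antipode_act _ _ h p,
            coact := codiagCoact lm ln,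
            coassoc := fun p => TLaux.tensor_coassoc lm ln p,
            coact_counit := fun p => TLaux.tensor_coact_counit lm ln p,
            compat := fun h p => TLaux.tensor_compat lm ln h p }, rfl, rfl⟩
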